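/- Fix m ≥ 1 and 1 ≤ i ≤ m−1. If a, b ∈ A(m) both have a descent at i and b_{i+1} ≤ a_{i+1}, then for every c ∈ A(m), E_3(a⋆, b, c) ≤ E_3(a, b, c), where a⋆ = a^{⋆,i}. (This uses the FKG inequality E_2(b,c) = E(bc) − E(b)E(c) ≥ 0, which may be assumed.) -/
import Mathlib


/-- `a` belongs to `A(m)`: integer sequences with `m ≥ a_1 ≥ ⋯ ≥ a_m ≥ 0`. -/
def memA (m : ℕ) (a : Fin m → ℤ) : Prop :=
  (∀ j, 0 ≤ a j) ∧ (∀ j, a j ≤ (m : ℤ)) ∧ Antitone a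

/-- Expectation of a sequence: `E(a) = (a_1 + ⋯ + a_m)/m²`. -/
noncomputable def Eseq {m : ℕ} (a : Fin m → ℤ) : ℝ :=
  (∑ j, (a j : ℝ)) / (m : ℝ) ^ 2

/-- Pointwise product of sequences: `(ab)_j = min(a_j, b_j)`. -/
def prodMin {m : ℕ} (a b : Fin m → ℤ) : Fin m → ℤ := fun j => min (a j) (b j)

/-- `a⁺ = a^{+,i}`: agrees with `a` except `(a⁺)_{i+1} = a_i` (here `i` is 0-based,
so positions `i, i+1` are the 1-based positions `i+1, i+2`). -/
def aPlus {m : ℕ} (a : Fin m → ℤ) (i : ℕ) (hi : i + 1 < m) : Fin m → ℤ :=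
  Function.update a ⟨i + 1, hi⟩ (a ⟨i, by omega⟩)

/-- `a⁻ = a^{−,i}`: agrees with `a` except `(a⁻)_i = a_{i+1}`. -/
def aMinus {m : ℕ} (a : Fin m → ℤ) (i : ℕ) (hi : i + 1 < m) : Fin m → ℤ :=
  Function.update a ⟨i, by omega⟩ (a ⟨i + 1, hi⟩)

/-- `a⋆ = a^{⋆,i}`: agrees with `a` except `(a⋆)_{i+1} = a_{i+1} + 1`. -/
def aStar {m : ℕ} (a : Fin m → ℤ) (i : ℕ) (hi : i + 1 < m) : Fin m → ℤ :=
  Function.update a ⟨i + 1, hi⟩ (a ⟨i + 1, hi⟩ + 1)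

/-- `E₃(a,b,c) = 2E(abc) + E(a)E(b)E(c) − E(a)E(bc) − E(b)E(ac) − E(c)E(ab)`. -/
noncomputable def E3seq {m : ℕ} (a b c : Fin m → ℤ) : ℝ :=
  2 * Eseq (prodMin a (prodMin b c)) + Eseq a * Eseq b * Eseq c
    - Eseq a * Eseq (prodMin b c) - Eseq b * Eseq (prodMin a c)
    - Eseq c * Eseq (prodMin a b)

/-- If `a, b ∈ A(m)` both have a descent at `i` and `b_{i+1} ≤ a_{i+1}`,
then for every `c ∈ A(m)` we have `E₃(a⋆,b,c) ≤ E₃(a,b,c)`.  The FKG inequality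
`E₂(x,y) = E(xy) − E(x)E(y) ≥ 0` for sequences in `A(m)` is assumed as a hypothesis. -/
theorem stmt_4 (m : ℕ) (hm : 1 ≤ m) (i : ℕ) (hi : i + 1 < m)
    (hFKG : ∀ x y : Fin m → ℤ, memA m x → memA m y →
      Eseq x * Eseq y ≤ Eseq (prodMin x y))
    (a b : Fin m → ℤ) (ha : memA m a) (hb : memA m b)
    (hdesa : a ⟨i + 1, hi⟩ < a ⟨i, by omega⟩)
    (hdesb : b ⟨i + 1, hi⟩ < b ⟨i, by omega⟩)
    (hba : b ⟨i + 1, hi⟩ ≤ a ⟨i + 1, hi⟩) :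
    ∀ c : Fin m → ℤ, memA m c → E3seq (aStar a i hi) b c ≤ E3seq a b c := by
  intro c hc
  have hε : (0:ℝ) < 1 / (m : ℝ) ^ 2 := by
    have : (0:ℝ) < (m : ℝ) := by exact_mod_cast hm
    positivity
  have h1 : prodMin (aStar a i hi) b = prodMin a b := by
    funext j
    simp only [prodMin, aStar, Function.update_apply]
    split
    · next h => subst h; omega
    · rfl
  have h2 : prodMin (aStar a i hi) (prodMin b c) = prodMin a (prodMin b c) := by
    funext j
    simp only [prodMin, aStar, Function.update_apply]
    split
    · next h => subst h; omega
    · rfl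
  have hsum : ∑ j, ((aStar a i hi) j : ℝ) = (∑ j, (a j : ℝ)) + 1 := by
    have key : ∀ j : Fin m, ((aStar a i hi) j : ℝ)
        = (a j : ℝ) + (if j = ⟨i + 1, hi⟩ then (1:ℝ) else 0) := by
      intro j
      simp only [aStar, Function.update_apply]
      split
      · next h => subst h; push_cast; ring
      · simp
    rw [Finset.sum_congr rfl (fun j _ => key j), Finset.sum_add_distrib]
    simp
  have h3 : Eseq (aStar a i hi) = Eseq a + 1 / (m : ℝ) ^ 2 := by
    rw [Eseq, Eseq, hsum, add_div]
  have h4 : Eseq (prodMin a c) ≤ Eseq (prodMin (aStar a i hi) c) := by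
    rw [Eseq, Eseq]
    have hm2 : (0:ℝ) < (m : ℝ) ^ 2 := by
      have : (0:ℝ) < (m : ℝ) := by exact_mod_cast hm
      positivity
    apply div_le_div_of_nonneg_right ?_ hm2.le
    apply Finset.sum_le_sum
    intro j _
    have : prodMin a c j ≤ prodMin (aStar a i hi) c j := by
      simp only [prodMin, aStar, Function.update_apply]
      split
      · next h => subst h; omega
      · exact le_refl _
    exact_mod_cast this
  have h5 : (0:ℝ) ≤ Eseq b := by
    apply div_nonneg
    · apply Finset.sum_nonneg
      intro j _
      exact_mod_cast hb.1 j
    · positivity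
  have hfkg := hFKG b c hb hc
  rw [E3seq, E3seq, h1, h2, h3]
  nlinarith [mul_nonneg h5 (sub_nonneg.mpr h4),
    mul_nonneg hε.le (sub_nonneg.mpr hfkg)]
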